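/- Let κ be a regular cardinal, μ a (κ,κ⁺)-cardinal, α < κ⁺, and δ a limit ordinal < ht(μ). If X ∈ μ has rank less than δ, then there is δ' < δ such that X ∩ μ_δ(α) ⊆ μ_{δ'}(α). -/

import Mathlib

open Set Cardinal Ordinal

noncomputable section

/-- Lower a (small) ordinal of `Ordinal.{1}` to `Ordinal.{0}` (the inverse of `Ordinal.lift`
on its range). -/
noncomputable def olower (o : Ordinal.{1}) : Ordinal.{0} :=
  sInf {a : Ordinal.{0} | Ordinal.lift.{1} a = o}

/-- The order type of a set of ordinals. -/
noncomputable def otp (A : Set Ordinal.{0}) : Ordinal.{0} :=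
  olower (Ordinal.type (Subrel ((· < ·) : Ordinal → Ordinal → Prop) (· ∈ A)))

/-- The canonical order-preserving transfer map from a set of ordinals `X` to a set of
ordinals `Y` of the same order type: an element `a ∈ X` is sent to the unique element of `Y`
occupying the same position. -/
noncomputable def omap (X Y : Set Ordinal) (a : Ordinal) : Ordinal :=
  sInf {b | b ∈ Y ∧ otp (Y ∩ Set.Iio b) = otp (X ∩ Set.Iio a)}

/-- `IsStar X₁ X₂ X` says `X = X₁ * X₂`: `X₁` and `X₂` have the same order type,
`X = X₁ ∪ X₂`, and `X₁ ∩ X₂ < X₁ \ X₂ < X₂ \ X₁` elementwise. -/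
def IsStar (X₁ X₂ X : Set Ordinal) : Prop :=
  otp X₁ = otp X₂ ∧ X = X₁ ∪ X₂ ∧
  (∀ a ∈ X₁ ∩ X₂, ∀ b ∈ X₁ \ X₂, a < b) ∧
  (∀ b ∈ X₁ \ X₂, ∀ c ∈ X₂ \ X₁, b < c)

set_option linter.deprecated false in
/-- A `(κ,κ⁺)`-cardinal (a neat simplified `(κ,1)`-morass presented as a family of sets):
a family `μ ⊆ ℘_κ(κ⁺)` which is well-founded under strict inclusion, locally small,
homogeneous, directed, locally almost directed, covers `κ⁺` and is neat. -/
structure TwoCardinal (κ : Cardinal.{0}) where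
  mu : Set (Set Ordinal)
  mem_sub : ∀ X ∈ mu, X ⊆ Set.Iio (Order.succ κ).ord
  mem_small : ∀ X ∈ mu, (otp X).card < κ
  wf : WellFounded fun X Y : mu => (X : Set Ordinal) ⊂ (Y : Set Ordinal)
  locSmall : ∀ X : mu,
    #{Z : mu // (Z : Set Ordinal) ⊂ (X : Set Ordinal)} < Cardinal.lift.{1} κ
  homog : ∀ X Y : mu, (wf.apply X).rank = (wf.apply Y).rank →
    otp (X : Set Ordinal) = otp (Y : Set Ordinal) ∧
    {Z | Z ∈ mu ∧ Z ⊂ (Y : Set Ordinal)} =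
      (fun Z => omap (X : Set Ordinal) (Y : Set Ordinal) '' Z) ''
        {Z | Z ∈ mu ∧ Z ⊂ (X : Set Ordinal)}
  directed : ∀ X ∈ mu, ∀ Y ∈ mu, ∃ Z ∈ mu, X ⊆ Z ∧ Y ⊆ Z
  locAlmostDirected : ∀ X : mu,
    (∀ Z₁ ∈ mu, ∀ Z₂ ∈ mu, Z₁ ⊂ (X : Set Ordinal) → Z₂ ⊂ (X : Set Ordinal) →
      ∃ Z ∈ mu, Z ⊂ (X : Set Ordinal) ∧ Z₁ ⊆ Z ∧ Z₂ ⊆ Z) ∨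
    (∃ X₁ X₂ : mu, (wf.apply X₁).rank = (wf.apply X₂).rank ∧
      IsStar (X₁ : Set Ordinal) (X₂ : Set Ordinal) (X : Set Ordinal) ∧
      {Z | Z ∈ mu ∧ Z ⊂ (X : Set Ordinal)} =
        {Z | Z ∈ mu ∧ Z ⊂ (X₁ : Set Ordinal)} ∪ {Z | Z ∈ mu ∧ Z ⊂ (X₂ : Set Ordinal)} ∪
          {(X₁ : Set Ordinal), (X₂ : Set Ordinal)})
  covers : ⋃₀ mu = Set.Iio (Order.succ κ).ord
  neat : ∀ X : mu, (wf.apply X).rank ≠ 0 →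
    (X : Set Ordinal) = ⋃₀ {Z | Z ∈ mu ∧ Z ⊂ (X : Set Ordinal)}

namespace TwoCardinal

variable {κ : Cardinal} (M : TwoCardinal κ)

set_option linter.deprecated false in
/-- The rank of an element of `μ` in the well-founded order `(μ, ⊂)`. -/
noncomputable def rank (X : M.mu) : Ordinal := olower ((M.wf.apply X).rank)

/-- The height of the well-founded order `(μ, ⊂)`. -/
noncomputable def ht : Ordinal := sSup (Set.range fun X : M.mu => M.rank X + 1)

/-- The term `μ_ξ(α)` of the μ-sequence at `α`: equal to `X ∩ α` for any `X ∈ μ` of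
rank `ξ` containing `α` (this is independent of the choice of `X`). -/
noncomputable def seq (α ξ : Ordinal) : Set Ordinal :=
  ⋃₀ {S | ∃ X : M.mu, M.rank X = ξ ∧ α ∈ (X : Set Ordinal) ∧
    S = (X : Set Ordinal) ∩ Set.Iio α}

/-- The μ-coloring `m(α,β) = min{rank X : α, β ∈ X ∈ μ}`. -/
noncomputable def mcol (a b : Ordinal) : Ordinal :=
  sInf {ξ | ∃ X : M.mu, M.rank X = ξ ∧ a ∈ (X : Set Ordinal) ∧ b ∈ (X : Set Ordinal)}

end TwoCardinal


/-!
A member `X` of rank below `δ` and a member `Z` of rank `δ` lie in a common member `V`, and one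
inducts on `V`. When `Z = V`, its rank is a limit, so `V` is not the star of two members of
equal rank and its proper submembers are directed; by neatness some proper submember contains
`α`, and a common upper bound of it and `X` below `V` has rank `< δ`. Otherwise either `X, Z` lie
in a common proper submember of `V`, or `V = V₁ * V₂` with `X ⊆ V₁`, `Z ⊆ V₂`; then the canonical
isomorphism `V₁ ≅ V₂` carries `X` to a member of `V₂` of the same rank that agrees with `X` on
`V₁ ∩ V₂`, an initial segment of both. The same induction shows that members of equal rank
agree below a common element, so `μ_δ(α)` does not depend on the member used to compute it.
-/

open Set Cardinal Ordinal Order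

section OrderType

variable {A B : Set Ordinal} {ρ a b : Ordinal}

theorem lift_otp_of_subset_Iio (hB : B ⊆ Iio ρ) : Ordinal.lift.{1} (otp B) = typeLT B :=
  csInf_mem (mem_range_lift_of_le ((type_mono hB).trans (type_lt_Iio ρ).le))

theorem lift_otp_inter_Iio (hb : b ∈ B) :
    Ordinal.lift.{1} (otp (B ∩ Iio b)) = typein (α := B) (· < ·) ⟨b, hb⟩ := by
  rw [lift_otp_of_subset_Iio inter_subset_right, ← type_subrel]
  exact type_eq.2 ⟨⟨⟨fun x => ⟨⟨x.1, x.2.1⟩, x.2.2⟩, fun y => ⟨y.1.1, y.1.2, y.2⟩,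
    fun _ => rfl, fun _ => rfl⟩, Iff.rfl⟩⟩

theorem otp_inter_Iio_strictMonoOn (B : Set Ordinal) : StrictMonoOn (fun b => otp (B ∩ Iio b)) B :=
  fun a ha b hb hab => Ordinal.lift_lt.1 <| by
    rw [lift_otp_inter_Iio ha, lift_otp_inter_Iio hb]
    exact (typein_lt_typein _).2 hab

theorem omap_spec (hA : A ⊆ Iio ρ) (hB : B ⊆ Iio ρ) (hotp : otp A = otp B) (ha : a ∈ A) :
    omap A B a ∈ B ∧ otp (B ∩ Iio (omap A B a)) = otp (A ∩ Iio a) := by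
  have hlt : Ordinal.lift.{1} (otp (A ∩ Iio a)) < typeLT B := by
    rw [← lift_otp_of_subset_Iio hB, Ordinal.lift_lt, ← hotp, ← Ordinal.lift_lt.{1},
      lift_otp_of_subset_Iio hA, lift_otp_inter_Iio ha]
    exact typein_lt_type _ _
  obtain ⟨⟨b, hb⟩, hbA⟩ := typein_surj _ hlt
  exact csInf_mem (s := {b | b ∈ B ∧ otp (B ∩ Iio b) = otp (A ∩ Iio a)})
    ⟨b, hb, Ordinal.lift_inj.1 ((lift_otp_inter_Iio hb).trans hbA)⟩

theorem omap_injOn (hA : A ⊆ Iio ρ) (hB : B ⊆ Iio ρ) (hotp : otp A = otp B) :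
    InjOn (omap A B) A := fun a ha a' ha' h =>
  (otp_inter_Iio_strictMonoOn A).injOn ha ha' <| by
    rw [← (omap_spec hA hB hotp ha).2, ← (omap_spec hA hB hotp ha').2, h]

theorem omap_eq_self (haB : a ∈ B) (h : otp (B ∩ Iio a) = otp (A ∩ Iio a)) : omap A B a = a := by
  have hsingle : {b | b ∈ B ∧ otp (B ∩ Iio b) = otp (A ∩ Iio a)} = {a} :=
    eq_singleton_iff_unique_mem.2 ⟨⟨haB, h⟩, fun b hb =>
      (otp_inter_Iio_strictMonoOn B).injOn hb.1 haB (hb.2.trans h.symm)⟩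
  rw [omap, hsingle, csInf_singleton]

end OrderType

theorem IsStar.inter_Iio_eq {X₁ X₂ X : Set Ordinal} (h : IsStar X₁ X₂ X) (hns : ¬X₁ ⊆ X₂)
    {a : Ordinal} (ha : a ∈ X₁ ∩ X₂) : X₁ ∩ Iio a = X₂ ∩ Iio a := by
  obtain ⟨d, hd₁, hd₂⟩ := not_subset.1 hns
  ext c
  simp only [mem_inter_iff, mem_Iio, and_congr_left_iff]
  refine fun hca => ⟨fun hc₁ => ?_, fun hc₂ => ?_⟩ <;> by_contra hc
  · exact (h.2.2.1 a ha c ⟨hc₁, hc⟩).not_gt hca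
  · exact ((h.2.2.1 a ha d ⟨hd₁, hd₂⟩).trans (h.2.2.2 d ⟨hd₁, hd₂⟩ c ⟨hc₂, hc⟩)).not_gt hca

namespace TwoCardinal

variable {κ : Cardinal} (M : TwoCardinal κ)

def wfRank (X : M.mu) : Ordinal.{1} := (M.wf.apply X).rank

variable {M}

theorem wfRank_eq (X : M.mu) :
    M.wfRank X = ⨆ Y : {Y : M.mu // (Y : Set Ordinal) ⊂ X}, succ (M.wfRank Y) :=
  (M.wf.apply X).rank_eq

theorem wfRank_lt_wfRank {X Y : M.mu} (h : (X : Set Ordinal) ⊂ Y) : M.wfRank X < M.wfRank Y :=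
  (M.wf.apply Y).rank_lt_of_rel h

theorem wfRank_mono {X Y : M.mu} (h : (X : Set Ordinal) ⊆ Y) : M.wfRank X ≤ M.wfRank Y := by
  obtain h | h := eq_or_ssubset_of_subset h
  · rw [Subtype.ext h]
  · exact (wfRank_lt_wfRank h).le

theorem eq_of_subset_of_wfRank_le {X Y : M.mu} (h : (X : Set Ordinal) ⊆ Y)
    (hr : M.wfRank Y ≤ M.wfRank X) : X = Y :=
  Subtype.ext <| (eq_or_ssubset_of_subset h).resolve_right fun hs =>
    (wfRank_lt_wfRank hs).not_ge hr

theorem wfRank_lt_lift_ord_succ (hκ : ℵ₀ ≤ κ) (X : M.mu) :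
    M.wfRank X < Ordinal.lift.{1} (succ κ).ord := by
  have hreg : (Cardinal.lift.{1} (succ κ)).IsRegular := (isRegular_succ hκ).lift
  induction X using M.wf.induction with
  | _ X ih =>
  rw [lift_ord, wfRank_eq]
  refine iSup_lt_of_lt_cof ?_ fun Y => ?_
  · rw [hreg.cof_ord]
    exact (M.locSmall X).trans (Cardinal.lift_lt.2 (lt_succ_of_not_isMax (not_isMax κ)))
  · exact (isSuccLimit_ord hreg.aleph0_le).succ_lt (lift_ord _ ▸ ih Y Y.2)

theorem lift_rank (hκ : ℵ₀ ≤ κ) (X : M.mu) : Ordinal.lift.{1} (M.rank X) = M.wfRank X :=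
  csInf_mem (mem_range_lift_of_le (wfRank_lt_lift_ord_succ hκ X).le)

theorem rank_lt_rank_iff (hκ : ℵ₀ ≤ κ) {X Y : M.mu} :
    M.rank X < M.rank Y ↔ M.wfRank X < M.wfRank Y := by
  rw [← Ordinal.lift_lt.{1}, lift_rank hκ, lift_rank hκ]

theorem rank_eq_rank_iff (hκ : ℵ₀ ≤ κ) {X Y : M.mu} :
    M.rank X = M.rank Y ↔ M.wfRank X = M.wfRank Y := by
  rw [← Ordinal.lift_inj.{1}, lift_rank hκ, lift_rank hκ]

theorem mem_seq {α ξ b : Ordinal} :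
    b ∈ M.seq α ξ ↔
      ∃ X : M.mu, M.rank X = ξ ∧ α ∈ (X : Set Ordinal) ∧ b ∈ (X : Set Ordinal) ∧ b < α := by
  constructor
  · rintro ⟨_, ⟨X, hX, hαX, rfl⟩, hbX, hbα⟩
    exact ⟨X, hX, hαX, hbX, hbα⟩
  · rintro ⟨X, hX, hαX, hbX, hbα⟩
    exact ⟨_, ⟨X, hX, hαX, rfl⟩, hbX, hbα⟩

section Homogeneity

variable {V₁ V₂ : M.mu} (hr : M.wfRank V₁ = M.wfRank V₂)
include hr

theorem omap_image_mem {Y : Set Ordinal} (hY : Y ∈ M.mu) (hYV : Y ⊂ V₁) :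
    omap V₁ V₂ '' Y ∈ M.mu ∧ omap V₁ V₂ '' Y ⊂ V₂ := by
  have : omap V₁ V₂ '' Y ∈ {Z | Z ∈ M.mu ∧ Z ⊂ V₂} := by
    rw [(M.homog V₁ V₂ hr).2]
    exact ⟨Y, ⟨hY, hYV⟩, rfl⟩
  exact this

theorem omap_injOn_of_wfRank_eq : InjOn (omap V₁ V₂) V₁ :=
  omap_injOn (M.mem_sub _ V₁.2) (M.mem_sub _ V₂.2) (M.homog V₁ V₂ hr).1

theorem exists_eq_omap_image {W Y' : M.mu} (hW : (W : Set Ordinal) ⊂ V₁)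
    (hY' : (Y' : Set Ordinal) ⊂ omap V₁ V₂ '' W) :
    ∃ Y : M.mu, (Y : Set Ordinal) ⊂ W ∧ (Y' : Set Ordinal) = omap V₁ V₂ '' Y := by
  have : (Y' : Set Ordinal) ∈ {Z | Z ∈ M.mu ∧ Z ⊂ V₂} :=
    ⟨Y'.2, hY'.trans (omap_image_mem hr W.2 hW).2⟩
  rw [(M.homog V₁ V₂ hr).2] at this
  obtain ⟨Y, ⟨hY, hYV⟩, hYY'⟩ := this
  rw [← hYY'] at hY'
  exact ⟨⟨Y, hY⟩, ((omap_injOn_of_wfRank_eq hr).image_ssubset_image_iff hYV.1 hW.1).1 hY',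
    hYY'.symm⟩

theorem wfRank_omap_image {W W' : M.mu} (hW : (W : Set Ordinal) ⊂ V₁)
    (hW' : (W' : Set Ordinal) = omap V₁ V₂ '' W) : M.wfRank W' = M.wfRank W := by
  induction W using M.wf.induction generalizing W' with
  | _ W ih =>
  apply le_antisymm
  · rw [wfRank_eq W']
    refine Ordinal.iSup_le fun ⟨Y', hY'⟩ => ?_
    obtain ⟨Y, hYW, hY'Y⟩ := exists_eq_omap_image hr hW (hW' ▸ hY')
    rw [ih Y hYW (hYW.trans hW) hY'Y]
    exact succ_le_of_lt (wfRank_lt_wfRank hYW)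
  · rw [wfRank_eq W]
    refine Ordinal.iSup_le fun ⟨Y, hYW⟩ => ?_
    have hYV := hYW.trans hW
    rw [← ih Y hYW hYV (W' := ⟨_, (omap_image_mem hr Y.2 hYV).1⟩) rfl]
    refine succ_le_of_lt (wfRank_lt_wfRank ?_)
    rw [hW']
    exact ((omap_injOn_of_wfRank_eq hr).image_ssubset_image_iff hYV.1 hW.1).2 hYW

end Homogeneity

variable (M) in
/-- A weakening of the second alternative of `locAlmostDirected` that, unlike `V = V₁ * V₂`,
is symmetric in `V₁, V₂`. -/
structure IsSplit (V V₁ V₂ : M.mu) : Prop where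
  left_ssubset : (V₁ : Set Ordinal) ⊂ V
  right_ssubset : (V₂ : Set Ordinal) ⊂ V
  wfRank_eq : M.wfRank V₁ = M.wfRank V₂
  inter_Iio_eq : ∀ a ∈ (V₁ : Set Ordinal) ∩ V₂,
    (V₁ : Set Ordinal) ∩ Iio a = (V₂ : Set Ordinal) ∩ Iio a
  subset_or_subset : ∀ Y : M.mu, (Y : Set Ordinal) ⊂ V →
    (Y : Set Ordinal) ⊆ V₁ ∨ (Y : Set Ordinal) ⊆ V₂

namespace IsSplit

variable {V V₁ V₂ : M.mu} (h : M.IsSplit V V₁ V₂)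
include h

theorem symm : M.IsSplit V V₂ V₁ where
  left_ssubset := h.right_ssubset
  right_ssubset := h.left_ssubset
  wfRank_eq := h.wfRank_eq.symm
  inter_Iio_eq a ha := (h.inter_Iio_eq a ⟨ha.2, ha.1⟩).symm
  subset_or_subset Y hY := (h.subset_or_subset Y hY).symm

theorem wfRank_le_succ : M.wfRank V ≤ succ (M.wfRank V₁) := by
  rw [TwoCardinal.wfRank_eq V]
  refine Ordinal.iSup_le fun Y => succ_le_succ ?_
  rcases h.subset_or_subset Y Y.2 with hY | hY
  · exact wfRank_mono hY
  · exact h.wfRank_eq ▸ wfRank_mono hY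

theorem not_isSuccLimit : ¬IsSuccLimit (M.wfRank V) := fun hlim =>
  h.wfRank_le_succ.not_gt (hlim.succ_lt (wfRank_lt_wfRank h.left_ssubset))

theorem inter_Iic_subset {a : Ordinal} (ha : a ∈ (V₁ : Set Ordinal) ∩ V₂) :
    (V₁ : Set Ordinal) ∩ Iic a ⊆ V₂ := by
  rintro b ⟨hb, hba : b ≤ a⟩
  rcases hba.lt_or_eq with hba | rfl
  · exact (h.inter_Iio_eq a ha ▸ ⟨hb, hba⟩ : b ∈ (V₂ : Set Ordinal) ∩ Iio a).1
  · exact ha.2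

theorem exists_transfer {Y : M.mu} (hY : (Y : Set Ordinal) ⊆ V₁) :
    ∃ Y' : M.mu, (Y' : Set Ordinal) ⊆ V₂ ∧ M.wfRank Y' = M.wfRank Y ∧
      (Y : Set Ordinal) ∩ V₂ ⊆ Y' := by
  obtain hYV | hYV := eq_or_ssubset_of_subset hY
  · obtain rfl : Y = V₁ := Subtype.ext hYV
    exact ⟨V₂, subset_rfl, h.wfRank_eq.symm, inter_subset_right⟩
  refine ⟨⟨_, (omap_image_mem h.wfRank_eq Y.2 hYV).1⟩,
    (omap_image_mem h.wfRank_eq Y.2 hYV).2.1, wfRank_omap_image h.wfRank_eq hYV rfl, ?_⟩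
  rintro b ⟨hbY, hbV₂⟩
  -- `omap V₁ V₂` fixes the common initial segment `V₁ ∩ V₂`
  exact ⟨b, hbY, omap_eq_self hbV₂ (congrArg otp (h.inter_Iio_eq b ⟨hY hbY, hbV₂⟩)).symm⟩

theorem exists_transfer_of_subset_right {X Z : M.mu} (hX : (X : Set Ordinal) ⊆ V₁)
    (hZ : (Z : Set Ordinal) ⊆ V₂) :
    ∃ X' : M.mu, (X' : Set Ordinal) ⊆ V₂ ∧ M.wfRank X' = M.wfRank X ∧
      ∀ a ∈ (X : Set Ordinal) ∩ Z, (X : Set Ordinal) ∩ Iic a ⊆ X' := by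
  obtain ⟨X', hX'V, hr, hXX'⟩ := h.exists_transfer hX
  exact ⟨X', hX'V, hr, fun a ha b hb =>
    hXX' ⟨hb.1, h.inter_Iic_subset ⟨hX ha.1, hZ ha.2⟩ ⟨hX hb.1, hb.2⟩⟩⟩

end IsSplit

theorem directed_or_exists_isSplit (V : M.mu) :
    (∀ Z₁ ∈ M.mu, ∀ Z₂ ∈ M.mu, Z₁ ⊂ (V : Set Ordinal) → Z₂ ⊂ (V : Set Ordinal) →
      ∃ Z ∈ M.mu, Z ⊂ (V : Set Ordinal) ∧ Z₁ ⊆ Z ∧ Z₂ ⊆ Z) ∨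
    ∃ V₁ V₂ : M.mu, M.IsSplit V V₁ V₂ := by
  refine (M.locAlmostDirected V).imp id fun ⟨V₁, V₂, hr, hstar, hsub⟩ => ⟨V₁, V₂, ?_⟩
  have of_ssubset : ∀ {Y : Set Ordinal}, Y ∈ M.mu → Y ⊂ V →
      (Y ∈ M.mu ∧ Y ⊂ V₁) ∨ (Y ∈ M.mu ∧ Y ⊂ V₂) ∨ Y = V₁ ∨ Y = V₂ := fun hY hYV => by
    simpa only [mem_union, mem_ofPred_eq, mem_insert_iff, mem_singleton_iff, or_assoc]
      using hsub.le ⟨hY, hYV⟩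
  have ssubset_of_mem : ∀ {Y : Set Ordinal}, Y = V₁ ∨ Y = V₂ → Y ⊂ V := fun hY =>
    (hsub.ge (by simp only [mem_union, mem_insert_iff, mem_singleton_iff]; exact Or.inr hY)).2
  refine ⟨ssubset_of_mem (Or.inl rfl), ssubset_of_mem (Or.inr rfl), hr, fun a ha => ?_,
    fun Y hY => ?_⟩
  · by_cases h₁₂ : (V₁ : Set Ordinal) ⊆ V₂
    · rw [eq_of_subset_of_wfRank_le h₁₂ hr.ge]
    · exact hstar.inter_Iio_eq h₁₂ ha
  · rcases of_ssubset Y.2 hY with h | h | h | h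
    exacts [Or.inl h.2.1, Or.inr h.2.1, Or.inl h.le, Or.inr h.le]

theorem exists_reduction {V X Z : M.mu} (hX : (X : Set Ordinal) ⊂ V) (hZ : (Z : Set Ordinal) ⊂ V) :
    ∃ V' X' : M.mu, (V' : Set Ordinal) ⊂ V ∧ (X' : Set Ordinal) ⊆ V' ∧ (Z : Set Ordinal) ⊆ V' ∧
      M.wfRank X' = M.wfRank X ∧ ∀ a ∈ (X : Set Ordinal) ∩ Z, (X : Set Ordinal) ∩ Iic a ⊆ X' := by
  rcases directed_or_exists_isSplit V with hdir | ⟨V₁, V₂, h⟩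
  · obtain ⟨U, hU, hUV, hXU, hZU⟩ := hdir X X.2 Z Z.2 hX hZ
    exact ⟨⟨U, hU⟩, X, hUV, hXU, hZU, rfl, fun _ _ => inter_subset_left⟩
  rcases h.subset_or_subset X hX with hX₁ | hX₂ <;>
    rcases h.subset_or_subset Z hZ with hZ₁ | hZ₂
  · exact ⟨V₁, X, h.left_ssubset, hX₁, hZ₁, rfl, fun _ _ => inter_subset_left⟩
  · obtain ⟨X', hX'V, hr, hXX'⟩ := h.exists_transfer_of_subset_right hX₁ hZ₂
    exact ⟨V₂, X', h.right_ssubset, hX'V, hZ₂, hr, hXX'⟩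
  · obtain ⟨X', hX'V, hr, hXX'⟩ := h.symm.exists_transfer_of_subset_right hX₂ hZ₁
    exact ⟨V₁, X', h.left_ssubset, hX'V, hZ₁, hr, hXX'⟩
  · exact ⟨V₂, X, h.right_ssubset, hX₂, hZ₂, rfl, fun _ _ => inter_subset_left⟩

theorem inter_Iio_subset_of_subset (V : M.mu) :
    ∀ Z Z' : M.mu, (Z : Set Ordinal) ⊆ V → (Z' : Set Ordinal) ⊆ V → M.wfRank Z = M.wfRank Z' →
      ∀ α ∈ (Z : Set Ordinal) ∩ Z', (Z : Set Ordinal) ∩ Iio α ⊆ Z' := by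
  induction V using M.wf.induction with
  | _ V ih =>
  intro Z Z' hZ hZ' hr α hα
  obtain hZV | hZV := eq_or_ssubset_of_subset hZ
  · rw [eq_of_subset_of_wfRank_le (hZV ▸ hZ') hr.le]
    exact inter_subset_left
  obtain hZ'V | hZ'V := eq_or_ssubset_of_subset hZ'
  · rw [eq_of_subset_of_wfRank_le (hZ'V ▸ hZ) hr.ge]
    exact inter_subset_left
  obtain ⟨V', Z'', hV'V, hZ''V', hZ'V', hr'', hZZ''⟩ := exists_reduction hZV hZ'V
  rintro b ⟨hbZ, hbα⟩
  have hαZ'' : α ∈ (Z'' : Set Ordinal) := hZZ'' α hα ⟨hα.1, mem_Iic.2 le_rfl⟩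
  exact ih V' hV'V Z'' Z' hZ''V' hZ'V' (hr''.trans hr) α ⟨hαZ'', hα.2⟩
    ⟨hZZ'' α hα ⟨hbZ, mem_Iic.2 hbα.le⟩, hbα⟩

theorem inter_Iio_subset_of_wfRank_eq {Z Z' : M.mu} (hr : M.wfRank Z = M.wfRank Z')
    {α : Ordinal} (hα : α ∈ (Z : Set Ordinal) ∩ Z') : (Z : Set Ordinal) ∩ Iio α ⊆ Z' := by
  obtain ⟨V, hV, hZV, hZ'V⟩ := M.directed Z Z.2 Z' Z'.2
  exact inter_Iio_subset_of_subset ⟨V, hV⟩ Z Z' hZV hZ'V hr α hα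

theorem exists_wfRank_lt_of_ssubset {X Z : M.mu} (hXZ : (X : Set Ordinal) ⊂ Z)
    (hlim : IsSuccLimit (M.wfRank Z)) {α : Ordinal} (hα : α ∈ (Z : Set Ordinal)) :
    ∃ W : M.mu, M.wfRank W < M.wfRank Z ∧ α ∈ (W : Set Ordinal) ∧ (X : Set Ordinal) ⊆ W := by
  have hdir := (directed_or_exists_isSplit Z).resolve_right fun ⟨_, _, h⟩ =>
    h.not_isSuccLimit hlim
  obtain ⟨S, ⟨hS, hSZ⟩, hαS⟩ : α ∈ ⋃₀ {Y | Y ∈ M.mu ∧ Y ⊂ (Z : Set Ordinal)} :=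
    M.neat Z hlim.ne_bot ▸ hα
  obtain ⟨W, hW, hWZ, hXW, hSW⟩ := hdir X X.2 S hS hXZ hSZ
  exact ⟨⟨W, hW⟩, wfRank_lt_wfRank hWZ, hSW hαS, hXW⟩

theorem exists_wfRank_lt_of_subset (V : M.mu) :
    ∀ X Z : M.mu, (X : Set Ordinal) ⊆ V → (Z : Set Ordinal) ⊆ V → M.wfRank X < M.wfRank Z →
      IsSuccLimit (M.wfRank Z) → ∀ α ∈ (Z : Set Ordinal),
      ∃ W : M.mu, M.wfRank W < M.wfRank Z ∧ α ∈ (W : Set Ordinal) ∧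
        (X : Set Ordinal) ∩ Z ⊆ W := by
  induction V using M.wf.induction with
  | _ V ih =>
  intro X Z hX hZ hr hlim α hα
  obtain hZV | hZV := eq_or_ssubset_of_subset hZ
  · have hXZ : (X : Set Ordinal) ⊂ Z :=
      (eq_or_ssubset_of_subset (hZV ▸ hX)).resolve_left fun h => hr.ne (congrArg _ (Subtype.ext h))
    obtain ⟨W, hW, hαW, hXW⟩ := exists_wfRank_lt_of_ssubset hXZ hlim hα
    exact ⟨W, hW, hαW, inter_subset_left.trans hXW⟩
  obtain hXV | hXV := eq_or_ssubset_of_subset hX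
  · exact absurd (wfRank_mono (hXV ▸ hZ)) hr.not_ge
  obtain ⟨V', X', hV'V, hX'V', hZV', hr', hXX'⟩ := exists_reduction hXV hZV
  obtain ⟨W, hW, hαW, hX'W⟩ := ih V' hV'V X' Z hX'V' hZV' (hr' ▸ hr) hlim α hα
  exact ⟨W, hW, hαW, fun b hb => hX'W ⟨hXX' b hb ⟨hb.1, mem_Iic.2 le_rfl⟩, hb.2⟩⟩

theorem exists_wfRank_lt_inter_subset {X Z : M.mu} (hr : M.wfRank X < M.wfRank Z)
    (hlim : IsSuccLimit (M.wfRank Z)) {α : Ordinal} (hα : α ∈ (Z : Set Ordinal)) :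
    ∃ W : M.mu, M.wfRank W < M.wfRank Z ∧ α ∈ (W : Set Ordinal) ∧ (X : Set Ordinal) ∩ Z ⊆ W := by
  obtain ⟨V, hV, hXV, hZV⟩ := M.directed X X.2 Z Z.2
  exact exists_wfRank_lt_of_subset ⟨V, hV⟩ X Z hXV hZV hr hlim α hα

end TwoCardinal

open TwoCardinal

theorem museq_cof_general (κ : Cardinal) (hκ : κ.IsRegular) (M : TwoCardinal κ)
    (α : Ordinal) (δ : Ordinal) (hδlim : Order.IsSuccLimit δ)
    (X : M.mu) (hrk : M.rank X < δ) :
    ∃ δ' < δ, (X : Set Ordinal) ∩ M.seq α δ ⊆ M.seq α δ' := by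
  obtain hempty | ⟨b₀, -, hb₀⟩ := ((X : Set Ordinal) ∩ M.seq α δ).eq_empty_or_nonempty
  · exact ⟨0, hδlim.bot_lt, hempty ▸ empty_subset _⟩
  obtain ⟨Z, rfl, hαZ, -⟩ := mem_seq.1 hb₀
  have hlim : IsSuccLimit (M.wfRank Z) := lift_rank hκ.aleph0_le Z ▸ isSuccLimit_lift.2 hδlim
  obtain ⟨W, hWZ, hαW, hXZW⟩ :=
    exists_wfRank_lt_inter_subset ((rank_lt_rank_iff hκ.aleph0_le).1 hrk) hlim hαZ
  refine ⟨M.rank W, (rank_lt_rank_iff hκ.aleph0_le).2 hWZ, fun b ⟨hbX, hb⟩ => ?_⟩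
  obtain ⟨Z', hZ', hαZ', hbZ', hbα⟩ := mem_seq.1 hb
  have hbZ : b ∈ (Z : Set Ordinal) :=
    inter_Iio_subset_of_wfRank_eq ((rank_eq_rank_iff hκ.aleph0_le).1 hZ') ⟨hαZ', hαZ⟩ ⟨hbZ', hbα⟩
  exact mem_seq.2 ⟨W, rfl, hαW, hXZW ⟨hbX, hbZ⟩, hbα⟩

/-- If `X ∈ μ` has rank less than a limit ordinal `δ < ht(μ)`, then `X ∩ μ_δ(α)` is contained
in some earlier term `μ_{δ'}(α)` of the μ-sequence at `α`. -/
theorem museq_cof (κ : Cardinal) (hκ : κ.IsRegular) (M : TwoCardinal κ)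
    (α : Ordinal) (hα : α < (Order.succ κ).ord) (δ : Ordinal) (hδlim : Order.IsSuccLimit δ)
    (hδ : δ < M.ht) (X : M.mu) (hrk : M.rank X < δ) :
    ∃ δ' < δ, (X : Set Ordinal) ∩ M.seq α δ ⊆ M.seq α δ' :=
  museq_cof_general κ hκ M α δ hδlim X hrk
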